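/- A polynomial ξ of degree at most 2n+1 in one real variable is nonnegative on [0, ∞) if and only if there exist polynomials f and g, each a sum of two squares of polynomials of degree ≤ n, such that ξ(t) = f(t) + t·g(t) for all t. -/

import Mathlib

/-!
Substituting `t = x²` turns `ξ` into `ξ(x²)`, which is nonnegative on all of `ℝ` and hence a sum
of two squares `A² + B²`: a nonreal root `a + bi` contributes the factor `(x - a)² + b²`, a real
root `a` has even multiplicity and contributes `(x - a)²`, and products of sums of two squares are
sums of two squares. Writing `A(x) = A₀(x²) + x A₁(x²)` (so `A₀ = contract 2 A` and
`A₁ = contract 2 A.divX`), the even part of `A²` is `A₀(x²)² + x² A₁(x²)²`, so taking even parts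
gives `ξ = A₀² + B₀² + t (A₁² + B₁²)`. The leading coefficients of `A²` and `B²` are positive and
cannot cancel, which gives the degree bounds.
-/

open Polynomial

namespace Polynomial

section Contract

variable {R : Type*} [CommSemiring R]

theorem natDegree_contract_le {p : ℕ} (hp : p ≠ 0) (f : R[X]) :
    (contract p f).natDegree ≤ f.natDegree / p := by
  refine natDegree_le_iff_coeff_eq_zero.mpr fun k hk => ?_
  rw [coeff_contract hp]
  exact coeff_eq_zero_of_natDegree_lt ((Nat.div_lt_iff_lt_mul (Nat.pos_of_ne_zero hp)).mp hk)

theorem expand_contract_add_X_mul_expand_contract_divX (f : R[X]) :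
    expand R 2 (contract 2 f) + X * expand R 2 (contract 2 f.divX) = f := by
  have hodd (k : ℕ) : ¬ 2 ∣ 2 * k + 1 := by omega
  ext n
  obtain ⟨k, rfl | rfl⟩ := Nat.even_or_odd' n
  · have hX : (X * expand R 2 (contract 2 f.divX)).coeff (2 * k) = 0 := by
      rcases k with _ | k
      · exact coeff_X_mul_zero _
      · rw [show 2 * (k + 1) = (2 * k + 1) + 1 by ring, coeff_X_mul,
          coeff_expand two_pos _ (2 * k + 1), if_neg (hodd k)]
    rw [coeff_add, hX, add_zero, coeff_expand_mul' two_pos, coeff_contract two_ne_zero, mul_comm]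
  · rw [coeff_add, coeff_X_mul, coeff_expand two_pos _ (2 * k + 1), if_neg (hodd k), zero_add,
      coeff_expand_mul' two_pos, coeff_contract two_ne_zero, coeff_divX, mul_comm]

theorem contract_two_sq (f : R[X]) :
    contract 2 (f ^ 2) = contract 2 f ^ 2 + X * contract 2 f.divX ^ 2 := by
  set f₀ := contract 2 f
  set f₁ := contract 2 f.divX
  have hsplit : f ^ 2 = expand R 2 (f₀ ^ 2 + X * f₁ ^ 2) + X * expand R 2 (2 * f₀ * f₁) := by
    conv_lhs => rw [← expand_contract_add_X_mul_expand_contract_divX f]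
    simp only [map_add, map_mul, map_pow, expand_X, map_ofNat]
    ring
  have hX : contract 2 (X : R[X]) = 0 := by
    ext n
    rw [coeff_contract two_ne_zero, coeff_X, coeff_zero, if_neg (by omega)]
  rw [hsplit, contract_add two_ne_zero, contract_expand 2 two_ne_zero,
    contract_mul_expand two_ne_zero, hX, zero_mul, add_zero]

end Contract

theorem two_mul_max_natDegree_le_natDegree_sq_add_sq {R : Type*} [CommRing R] [LinearOrder R]
    [IsStrictOrderedRing R] (A B : R[X]) :
    2 * max A.natDegree B.natDegree ≤ (A ^ 2 + B ^ 2).natDegree := by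
  wlog h : B.natDegree ≤ A.natDegree generalizing A B
  · rw [max_comm, add_comm]
    exact this B A (by omega)
  rw [max_eq_left h]
  rcases eq_or_ne A 0 with rfl | hA
  · simp
  apply le_natDegree_of_ne_zero
  rw [coeff_add, coeff_pow_of_natDegree_le le_rfl, coeff_pow_of_natDegree_le h]
  have : A.coeff A.natDegree ≠ 0 := leadingCoeff_ne_zero.mpr hA
  positivity

theorem X_sub_C_sq_dvd_of_isRoot_of_nonneg {p : ℝ[X]} {r : ℝ} (hp : ∀ x, 0 ≤ p.eval x)
    (hr : p.IsRoot r) : (X - C r) ^ 2 ∣ p := by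
  rcases eq_or_ne p 0 with rfl | hp0
  · exact dvd_zero _
  have hmin : IsLocalMin (fun x => p.eval x) r :=
    Filter.Eventually.of_forall fun x => by simpa [hr.eq_zero] using hp x
  have hder : p.derivative.IsRoot r := by
    simpa only [Polynomial.deriv, IsRoot.def] using hmin.deriv_eq_zero
  exact (le_rootMultiplicity_iff hp0).mp ((one_lt_rootMultiplicity_iff_isRoot hp0).mpr ⟨hr, hder⟩)

theorem eval_nonneg_of_eval_mul_nonneg {q f : ℝ[X]} (hq0 : q ≠ 0) (hq : ∀ x, 0 ≤ q.eval x)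
    (h : ∀ x, 0 ≤ (q * f).eval x) (x : ℝ) : 0 ≤ f.eval x := by
  have hdense : Dense (q.roots.toFinset : Set ℝ)ᶜ :=
    (Finset.countable_toSet _).dense_compl ℝ
  have hclosed : IsClosed {x | 0 ≤ f.eval x} := isClosed_le continuous_const f.continuous
  refine hclosed.closure_subset_iff.mpr (fun y hy => ?_) (hdense.closure_eq ▸ Set.mem_univ x)
  have hqy : 0 < q.eval y :=
    (hq y).lt_of_ne' fun h0 => hy (by simpa [hq0] using h0)
  exact (mul_nonneg_iff_of_pos_left hqy).mp (by simpa using h y)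

theorem exists_sq_add_sq_dvd_of_nonneg {p : ℝ[X]} (hp : ∀ x, 0 ≤ p.eval x)
    (hdeg : 0 < p.natDegree) : ∃ a b : ℝ, (X - C a) ^ 2 + C b ^ 2 ∣ p := by
  obtain ⟨z, hz⟩ := IsAlgClosed.exists_aeval_eq_zero ℂ p (natDegree_pos_iff_degree_pos.mp hdeg).ne'
  by_cases him : z.im = 0
  · refine ⟨z.re, 0, ?_⟩
    rw [map_zero, zero_pow two_ne_zero, add_zero]
    refine X_sub_C_sq_dvd_of_isRoot_of_nonneg hp ?_
    have hzre : algebraMap ℝ ℂ z.re = z := Complex.ext rfl (by simp [him])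
    rw [← hzre, aeval_algebraMap_apply, coe_aeval_eq_eval] at hz
    simpa using hz
  · refine ⟨z.re, z.im, ?_⟩
    convert p.quadratic_dvd_of_aeval_eq_zero_im_ne_zero hz him using 1
    rw [Complex.sq_norm, Complex.normSq_apply]
    simp only [map_add, map_mul, map_ofNat]
    ring

theorem exists_eq_sq_add_sq_of_nonneg (p : ℝ[X]) (hp : ∀ x, 0 ≤ p.eval x) :
    ∃ A B : ℝ[X], p = A ^ 2 + B ^ 2 := by
  induction hn : p.natDegree using Nat.strong_induction_on generalizing p with
  | _ n ih =>
  rcases Nat.eq_zero_or_pos n with rfl | hpos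
  · obtain ⟨c, rfl⟩ := natDegree_eq_zero.mp hn
    have hc : 0 ≤ c := by simpa using hp 0
    exact ⟨C √c, 0, by rw [← C_pow, Real.sq_sqrt hc]; ring⟩
  obtain ⟨a, b, ψ, rfl⟩ := exists_sq_add_sq_dvd_of_nonneg hp (hn ▸ hpos)
  set q : ℝ[X] := (X - C a) ^ 2 + C b ^ 2
  have hq : ∀ x, 0 ≤ q.eval x := fun x => by simp only [q, eval_add, eval_pow]; positivity
  have hqdeg : q.natDegree = 2 := by simp only [q]; compute_degree!
  have hq0 : q ≠ 0 := ne_zero_of_natDegree_gt (hqdeg ▸ two_pos)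
  have hψ0 : ψ ≠ 0 := by
    rintro rfl
    rw [mul_zero, natDegree_zero] at hn
    omega
  have hψdeg : ψ.natDegree < n := by rw [← hn, natDegree_mul hq0 hψ0]; omega
  obtain ⟨A, B, rfl⟩ := ih _ hψdeg ψ (eval_nonneg_of_eval_mul_nonneg hq0 hq hp) rfl
  exact ⟨(X - C a) * A - C b * B, (X - C a) * B + C b * A, sq_add_sq_mul_sq_add_sq⟩

end Polynomial

/-- A univariate real polynomial of degree ≤ 2n+1 is nonnegative
on [0,∞) iff ξ(t) = f(t) + t·g(t) with f, g sums of two squares of degree-≤n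
polynomials. -/
theorem nonneg_halfline_odd (n : ℕ) (ξ : Polynomial ℝ)
    (hdeg : ξ.natDegree ≤ 2 * n + 1) :
    (∀ t : ℝ, 0 ≤ t → 0 ≤ ξ.eval t) ↔
      ∃ p q r s : Polynomial ℝ,
        p.natDegree ≤ n ∧ q.natDegree ≤ n ∧ r.natDegree ≤ n ∧ s.natDegree ≤ n ∧
        ∀ t : ℝ, ξ.eval t =
          ((p.eval t) ^ 2 + (q.eval t) ^ 2) + t * ((r.eval t) ^ 2 + (s.eval t) ^ 2) := by
  refine ⟨fun h => ?_, ?_⟩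
  · obtain ⟨A, B, hAB⟩ := exists_eq_sq_add_sq_of_nonneg (expand ℝ 2 ξ) fun x => by
      simpa only [expand_eval] using h _ (sq_nonneg x)
    have hdegAB := two_mul_max_natDegree_le_natDegree_sq_add_sq A B
    rw [← hAB, natDegree_expand] at hdegAB
    have hbound : ∀ F : ℝ[X], F.natDegree ≤ 2 * n + 1 →
        (contract 2 F).natDegree ≤ n ∧ (contract 2 F.divX).natDegree ≤ n := fun F hF =>
      ⟨(natDegree_contract_le two_ne_zero F).trans (by omega),
        (natDegree_contract_le two_ne_zero _).trans
          (by rw [natDegree_divX_eq_natDegree_tsub_one]; omega)⟩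
    obtain ⟨hA₀, hA₁⟩ := hbound A (by omega)
    obtain ⟨hB₀, hB₁⟩ := hbound B (by omega)
    have hξ : ξ = (contract 2 A ^ 2 + contract 2 B ^ 2) +
        X * (contract 2 A.divX ^ 2 + contract 2 B.divX ^ 2) := by
      rw [← contract_expand 2 two_ne_zero (f := ξ), hAB, contract_add two_ne_zero,
        contract_two_sq, contract_two_sq]
      ring
    exact ⟨_, _, _, _, hA₀, hB₀, hA₁, hB₁, fun t => by rw [hξ]; simp⟩
  · rintro ⟨p, q, r, s, -, -, -, -, hrep⟩ t ht
    rw [hrep t]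
    positivity
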